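/- arXiv:1209.3598 — 2 statements merged into one kernel-verified Lean document; each statement's English description precedes it below -/
import Mathlib

section
/- For all integers 1 ≤ p ≤ q ≤ n, the minimum number of edges in an n × n bipartite graph that is weakly K_{p,q}-saturated equals n^2 − (n−p+1)^2 + (q−p)^2. -/
/-- `S`, `T` span a copy of `K_{p,q}`, with the side of size `p` in either
class. -/
def IsKpq (p q : ℕ) {n : ℕ} (S T : Finset (Fin n)) : Prop :=
  (S.card = p ∧ T.card = q) ∨ (S.card = q ∧ T.card = p)

/-- An `n × n` bipartite graph, given by its edge set
`E ⊆ X × Y = Fin n × Fin n`, is weakly `K_{p,q}`-saturated if its non-edges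
can be ordered as a list `l` so that adding them one at a time, each newly
added edge lies in a copy of `K_{p,q}` (in either orientation) all of whose
edges are already present. -/
def WeakSatBip (n p q : ℕ) (E : Finset (Fin n × Fin n)) : Prop :=
  ∃ l : List (Fin n × Fin n), l.Nodup ∧ (∀ e, e ∈ l ↔ e ∉ E) ∧
    ∀ k : Fin l.length, ∃ S T : Finset (Fin n),
      IsKpq p q S T ∧ l.get k ∈ S ×ˢ T ∧
      (S ×ˢ T : Finset (Fin n × Fin n)) ⊆ E ∪ (l.take (k + 1)).toFinset

/-- `W_n(p,q)`: the minimum number of edges of a weakly `K_{p,q}`-saturated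
`n × n` bipartite graph. -/
noncomputable def Wbip (n p q : ℕ) : ℕ :=
  sInf {m | ∃ E : Finset (Fin n × Fin n), WeakSatBip n p q E ∧ E.card = m}

/-!
Lower bound: for `m ≤ n` let `K_m ⊆ ℚⁿ` be the vectors annihilating the moments `∑ⱼ jᵈ wⱼ`,
`d < m`; it has dimension `n - m`. For `|S| = s` the vector of Lagrange weights of the nodes in
`S` lies in `K_{s-1}` and is nonzero exactly on `S`, so every copy `S × T` of `K_{p,q}` carries an
outer product supported exactly on `S × T` inside
`U = K_{p-1} ⊗ K_{q-1} + K_{q-1} ⊗ K_{p-1} ⊆ ℚ^{n×n}`. Modulo `U`, the unit vector of each newly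
added edge is therefore a combination of those of the edges already present, so the edges of a
weakly saturated graph together with `U` span `ℚ^{n×n}`, and
`|E| ≥ n² - dim U ≥ n² - (n-p+1)² + (q-p)²`.

Upper bound: take all edges at the first `p - 1` vertices of either class together with the
complete bipartite graph between the first `q - 1` vertices of each class. The missing edges can
be added in order of increasing `min i j`.
-/

open Finset Module

section Outer

variable {K ι κ : Type*} [Field K]

def outerProd : (ι → K) →ₗ[K] (κ → K) →ₗ[K] (ι × κ → K) :=
  (LinearMap.mul K (ι × κ → K)).compl₁₂ (LinearMap.funLeft K K Prod.fst)
    (LinearMap.funLeft K K Prod.snd)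

@[simp]
lemma outerProd_apply (x : ι → K) (y : κ → K) (e : ι × κ) : outerProd x y e = x e.1 * y e.2 := rfl

end Outer

section Map₂

variable {K M N P : Type*} [Field K] [AddCommGroup M] [AddCommGroup N] [AddCommGroup P]
  [Module K M] [Module K N] [Module K P]

lemma Submodule.finrank_map₂_le [FiniteDimensional K M] [FiniteDimensional K N]
    (f : M →ₗ[K] N →ₗ[K] P) (A : Submodule K M) (B : Submodule K N) :
    finrank K (Submodule.map₂ f A B) ≤ finrank K A * finrank K B := by
  rw [TensorProduct.map₂_eq_range_lift_comp_mapIncl, ← finrank_tensorProduct]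
  exact LinearMap.finrank_range_le _

lemma Submodule.exists_sup_eq_of_le [FiniteDimensional K M] {A B : Submodule K M} (hBA : B ≤ A) :
    ∃ C : Submodule K M, B ⊔ C = A ∧ finrank K B + finrank K C = finrank K A := by
  obtain ⟨C, hC⟩ := B.exists_isCompl
  have hBC : B ⊔ C ⊓ A = A := by rw [← sup_inf_assoc_of_le _ hBA, hC.sup_eq_top, top_inf_eq]
  refine ⟨C ⊓ A, hBC, ?_⟩
  rw [← Submodule.finrank_sup_add_finrank_inf_eq, hBC,
    (hC.disjoint.mono_right inf_le_left).eq_bot, finrank_bot, add_zero]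

lemma Submodule.finrank_map₂_sup_map₂_le [FiniteDimensional K M] [FiniteDimensional K P]
    (f : M →ₗ[K] M →ₗ[K] P) {A B : Submodule K M} (hBA : B ≤ A) :
    finrank K ↥(Submodule.map₂ f A B ⊔ Submodule.map₂ f B A) + (finrank K A - finrank K B) ^ 2 ≤
      finrank K A ^ 2 := by
  obtain ⟨C, rfl, hdim⟩ := Submodule.exists_sup_eq_of_le hBA
  have hle : Submodule.map₂ f (B ⊔ C) B ⊔ Submodule.map₂ f B (B ⊔ C) ≤
      Submodule.map₂ f B B ⊔ Submodule.map₂ f C B ⊔ Submodule.map₂ f B C := by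
    rw [Submodule.map₂_sup_left, Submodule.map₂_sup_right]
    exact sup_le (sup_le (le_sup_left.trans le_sup_left) (le_sup_right.trans le_sup_left))
      (sup_le (le_sup_left.trans le_sup_left) le_sup_right)
  rw [← hdim, Nat.add_sub_cancel_left]
  calc _ ≤ finrank K B * finrank K B + finrank K C * finrank K B +
        finrank K B * finrank K C + finrank K C ^ 2 := by
        gcongr
        refine (Submodule.finrank_mono hle).trans ?_
        refine (Submodule.finrank_add_le_finrank_add_finrank _ _).trans ?_
        gcongr
        · refine (Submodule.finrank_add_le_finrank_add_finrank _ _).trans ?_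
          gcongr <;> exact Submodule.finrank_map₂_le _ _ _
        · exact Submodule.finrank_map₂_le _ _ _
    _ = _ := by ring

end Map₂

section Moments

variable {K : Type*} [Field K] {n : ℕ} (x : Fin n → K)

def momentMatrix (m : ℕ) : Matrix (Fin m) (Fin n) K := .of fun d j => x j ^ (d : ℕ)

def momentKer (m : ℕ) : Submodule K (Fin n → K) := LinearMap.ker (momentMatrix x m).mulVecLin

variable {x}

lemma mem_momentKer {m : ℕ} {w : Fin n → K} :
    w ∈ momentKer x m ↔ ∀ d < m, ∑ j, x j ^ d * w j = 0 := by
  simp [momentKer, funext_iff, Matrix.mulVec, dotProduct, momentMatrix, Fin.forall_iff]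

lemma momentKer_antitone {m m' : ℕ} (h : m ≤ m') : momentKer x m' ≤ momentKer x m :=
  fun _ hw => mem_momentKer.2 fun d hd => mem_momentKer.1 hw d (hd.trans_le h)

lemma rank_momentMatrix (hx : Function.Injective x) {m : ℕ} (hm : m ≤ n) :
    (momentMatrix x m).rank = m := by
  refine le_antisymm (Matrix.rank_le_height _) ?_
  have hV : IsUnit (Matrix.vandermonde (x ∘ Fin.castLE hm)) :=
    (Matrix.isUnit_iff_isUnit_det _).2 <| isUnit_iff_ne_zero.2 <|
      Matrix.det_vandermonde_ne_zero_iff.2 (hx.comp (Fin.castLE_injective hm))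
  calc m = (Matrix.vandermonde (x ∘ Fin.castLE hm)).rank := by
        rw [Matrix.rank_of_isUnit _ hV, Fintype.card_fin]
    _ = ((momentMatrix x m).transpose.submatrix (Fin.castLE hm) id).rank := rfl
    _ ≤ (momentMatrix x m).transpose.rank := Matrix.rank_submatrix_le _ _ _
    _ = (momentMatrix x m).rank := Matrix.rank_transpose _

lemma finrank_momentKer (hx : Function.Injective x) {m : ℕ} (hm : m ≤ n) :
    finrank K (momentKer x m) = n - m := by
  have := LinearMap.finrank_range_add_finrank_ker (momentMatrix x m).mulVecLin
  rw [← Matrix.rank, rank_momentMatrix hx hm, finrank_fin_fun] at this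
  rw [momentKer]
  omega

def lagrangeVec (x : Fin n → K) (S : Finset (Fin n)) : Fin n → K :=
  fun i => if i ∈ S then Lagrange.nodalWeight S x i else 0

lemma lagrangeVec_ne_zero_iff (hx : Function.Injective x) {S : Finset (Fin n)} {i : Fin n} :
    lagrangeVec x S i ≠ 0 ↔ i ∈ S := by
  by_cases hi : i ∈ S
  · simpa [lagrangeVec, hi] using Lagrange.nodalWeight_ne_zero hx.injOn hi
  · simp [lagrangeVec, hi]

lemma lagrangeVec_mem_momentKer (hx : Function.Injective x) {S : Finset (Fin n)} {m : ℕ}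
    (hm : m < #S) : lagrangeVec x S ∈ momentKer x m := by
  refine mem_momentKer.2 fun d hd => ?_
  have hdeg : (Polynomial.X ^ d : Polynomial K).degree < #S := by
    rw [Polynomial.degree_X_pow]; exact_mod_cast hd.trans hm
  have := Lagrange.coeff_eq_sum hx.injOn hdeg
  rw [Polynomial.coeff_X_pow, if_neg (by omega)] at this
  simp only [lagrangeVec, mul_ite, mul_zero]
  rw [Finset.sum_ite_mem, univ_inter, this]
  refine sum_congr rfl fun i _ => ?_
  simp [Lagrange.nodalWeight, div_eq_mul_inv]

end Moments

section Span

variable {K M α : Type*} [Field K] [AddCommGroup M] [Module K M]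

lemma List.forall_mem_of_getElem_mem_sup_span_take (P : Submodule K M) (φ : α → M)
    (l : List α)
    (h : ∀ k (hk : k < l.length), φ l[k] ∈ P ⊔ Submodule.span K (φ '' {x | x ∈ l.take k})) :
    ∀ x ∈ l, φ x ∈ P := by
  suffices ∀ k, ∀ x ∈ l.take k, φ x ∈ P from
    fun x hx => this l.length x (by rwa [List.take_length])
  intro k
  induction k with
  | zero => simp
  | succ k ih =>
    intro x hx
    rcases lt_or_ge k l.length with hk | hk
    · rw [List.take_add_one, List.getElem?_eq_getElem hk, Option.toList_some, List.mem_append,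
        List.mem_singleton] at hx
      rcases hx with hx | rfl
      · exact ih x hx
      · have hspan : Submodule.span K (φ '' {x | x ∈ l.take k}) ≤ P :=
          Submodule.span_le.2 fun _ ⟨y, hy, hyx⟩ => hyx ▸ ih y hy
        exact (sup_le le_rfl hspan : _ ≤ P) (h k hk)
    · rw [List.take_of_length_le (by omega)] at hx
      exact ih x (by rwa [List.take_of_length_le hk])

variable {ι : Type*} [DecidableEq ι]

lemma Pi.single_mem_sup_span_single {W : Submodule K (ι → K)} {v : ι → K} (hv : v ∈ W)
    {s : Finset ι} (hs : ∀ j ∉ s, v j = 0) {i : ι} (hi : v i ≠ 0) :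
    Pi.single i 1 ∈ W ⊔ Submodule.span K ((fun j => Pi.single j (1 : K)) '' ↑(s.erase i)) := by
  have his : i ∈ s := by_contra fun h => hi (hs i h)
  have hv_eq : v = v i • Pi.single i 1 + ∑ j ∈ s.erase i, v j • Pi.single j 1 := by
    rw [Finset.add_sum_erase _ (fun j => v j • Pi.single j (1 : K)) his]
    ext k
    by_cases hk : k ∈ s <;> simp [Finset.sum_apply, Pi.single_apply, hk, hs]
  have hsingle : Pi.single i (1 : K) = (v i)⁻¹ • (v - ∑ j ∈ s.erase i, v j • Pi.single j 1) := by
    rw [← eq_sub_of_add_eq hv_eq.symm, smul_smul, inv_mul_cancel₀ hi, one_smul]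
  rw [hsingle]
  refine Submodule.smul_mem _ _ (Submodule.sub_mem _ (Submodule.mem_sup_left hv)
    (Submodule.mem_sup_right (Submodule.sum_mem _ fun j hj => Submodule.smul_mem _ _ ?_)))
  exact Submodule.subset_span ⟨j, hj, rfl⟩

end Span

lemma WeakSatBip.sq_le_card_add_finrank {K : Type*} [Field K] {n p q : ℕ}
    {E : Finset (Fin n × Fin n)} {W : Submodule K (Fin n × Fin n → K)}
    (hW : ∀ S T, IsKpq p q S T → ∃ v ∈ W, ∀ e, v e ≠ 0 ↔ e ∈ S ×ˢ T)
    (hE : WeakSatBip n p q E) : n ^ 2 ≤ #E + finrank K W := by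
  classical
  set φ : Fin n × Fin n → Fin n × Fin n → K := fun e => Pi.single e 1
  set P := W ⊔ Submodule.span K (φ '' E)
  obtain ⟨l, -, hl, hstep⟩ := hE
  have hφP : ∀ e, φ e ∈ P := by
    intro e
    by_cases he : e ∈ E
    · exact Submodule.mem_sup_right (Submodule.subset_span ⟨e, he, rfl⟩)
    refine l.forall_mem_of_getElem_mem_sup_span_take P φ (fun k hk => ?_) e ((hl e).2 he)
    obtain ⟨S, T, hST, hkST, hsub⟩ := hstep ⟨k, hk⟩
    obtain ⟨v, hvW, hv⟩ := hW S T hST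
    have hsub' : ↑((S ×ˢ T).erase l[k]) ⊆ (E : Set _) ∪ {x | x ∈ l.take k} := by
      intro f hf
      obtain ⟨hne, hf⟩ := mem_erase.1 hf
      have := hsub hf
      rw [mem_union, List.mem_toFinset, Fin.val_mk, List.take_add_one, List.getElem?_eq_getElem hk,
        Option.toList_some, List.mem_append, List.mem_singleton] at this
      simp only [Set.mem_union, Finset.mem_coe, Set.mem_ofPred_eq]
      tauto
    have hle : W ⊔ Submodule.span K (φ '' ↑((S ×ˢ T).erase l[k])) ≤
        P ⊔ Submodule.span K (φ '' {x | x ∈ l.take k}) := by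
      rw [sup_assoc, ← Submodule.span_union, ← Set.image_union]
      exact sup_le_sup_left (Submodule.span_mono (Set.image_mono hsub')) _
    exact hle (Pi.single_mem_sup_span_single hvW (fun f hf => not_not.1 (mt (hv f).1 hf))
      ((hv _).2 hkST))
  have htop : P = ⊤ := by
    refine eq_top_iff.2 ((Pi.basisFun K (Fin n × Fin n)).span_eq.symm.le.trans ?_)
    rw [Submodule.span_le]
    rintro _ ⟨e, rfl⟩
    simpa using hφP e
  calc n ^ 2 = finrank K P := by rw [htop, finrank_top, finrank_fintype_fun_eq_card]; simp [sq]
    _ ≤ finrank K W + finrank K (Submodule.span K (φ '' E)) :=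
      Submodule.finrank_add_le_finrank_add_finrank _ _
    _ ≤ finrank K W + #E := by
      gcongr
      rw [← coe_image]
      exact (finrank_span_finset_le_card _).trans card_image_le
    _ = #E + finrank K W := add_comm _ _

lemma IsKpq.exists_mem_map₂_outerProd {K : Type*} [Field K] {n p q : ℕ} {x : Fin n → K}
    (hx : Function.Injective x) (hp : 0 < p) (hq : 0 < q) {S T : Finset (Fin n)}
    (hST : IsKpq p q S T) :
    ∃ v ∈ Submodule.map₂ outerProd (momentKer x (p - 1)) (momentKer x (q - 1)) ⊔
        Submodule.map₂ outerProd (momentKer x (q - 1)) (momentKer x (p - 1)),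
      ∀ e, v e ≠ 0 ↔ e ∈ S ×ˢ T := by
  refine ⟨outerProd (lagrangeVec x S) (lagrangeVec x T), ?_, fun e => ?_⟩
  · rcases hST with ⟨hS, hT⟩ | ⟨hS, hT⟩
    · exact Submodule.mem_sup_left <| Submodule.apply_mem_map₂ _
        (lagrangeVec_mem_momentKer hx (by omega)) (lagrangeVec_mem_momentKer hx (by omega))
    · exact Submodule.mem_sup_right <| Submodule.apply_mem_map₂ _
        (lagrangeVec_mem_momentKer hx (by omega)) (lagrangeVec_mem_momentKer hx (by omega))
  · rw [outerProd_apply, mul_ne_zero_iff, lagrangeVec_ne_zero_iff hx, lagrangeVec_ne_zero_iff hx,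
      mem_product]

theorem WeakSatBip.le_card {n p q : ℕ} (hp : 1 ≤ p) (hpq : p ≤ q) (hqn : q ≤ n)
    {E : Finset (Fin n × Fin n)} (hE : WeakSatBip n p q E) :
    n ^ 2 - (n - p + 1) ^ 2 + (q - p) ^ 2 ≤ #E := by
  set x : Fin n → ℚ := fun j => (j : ℕ)
  have hx : Function.Injective x := Nat.cast_injective.comp Fin.val_injective
  have hspan := hE.sq_le_card_add_finrank fun S T hST =>
    IsKpq.exists_mem_map₂_outerProd hx (by omega) (by omega) hST
  have hdim := Submodule.finrank_map₂_sup_map₂_le outerProd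
    (momentKer_antitone (x := x) (by omega : p - 1 ≤ q - 1))
  rw [finrank_momentKer hx (by omega), finrank_momentKer hx (by omega),
    show n - (p - 1) - (n - (q - 1)) = q - p by omega,
    show n - (p - 1) = n - p + 1 by omega] at hdim
  have hn : (n - p + 1) ^ 2 ≤ n ^ 2 := Nat.pow_le_pow_left (by omega) 2
  omega

lemma isKpq_comm {n p q : ℕ} {S T : Finset (Fin n)} : IsKpq p q S T ↔ IsKpq p q T S := by
  unfold IsKpq; tauto

theorem weakSatBip_of_rank {n p q : ℕ} {E : Finset (Fin n × Fin n)} (r : Fin n × Fin n → ℕ)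
    (h : ∀ e ∉ E, ∃ S T, IsKpq p q S T ∧ e ∈ S ×ˢ T ∧
      ∀ f ∈ S ×ˢ T, f ≠ e → f ∈ E ∨ r f < r e) :
    WeakSatBip n p q E := by
  set l := Eᶜ.toList.mergeSort fun e f => r e ≤ r f
  have hperm : l.Perm Eᶜ.toList := List.mergeSort_perm _ _
  have hsorted : l.Pairwise fun e f => r e ≤ r f := by
    simpa using List.pairwise_mergeSort (le := fun e f => r e ≤ r f)
      (fun a b c hab hbc => by simp only [decide_eq_true_eq] at *; omega)
      (fun a b => by simp only [Bool.or_eq_true, decide_eq_true_eq]; omega) Eᶜ.toList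
  refine ⟨l, hperm.nodup_iff.2 (nodup_toList _), fun e => by simp [hperm.mem_iff],
    fun k => ?_⟩
  have hl : l.take (k + 1) ++ l.drop (k + 1) = l := l.take_append_drop _
  have hk : l.get k ∈ l.take (k + 1) := by
    rw [List.mem_take_iff_getElem]
    exact ⟨k, by omega, rfl⟩
  obtain ⟨S, T, hST, hkST, hsub⟩ := h (l.get k) (by simpa [hperm.mem_iff] using List.get_mem l k)
  refine ⟨S, T, hST, hkST, fun f hf => ?_⟩
  rw [mem_union, List.mem_toFinset]
  by_cases hfk : f = l.get k
  · exact Or.inr (hfk ▸ hk)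
  rcases hsub f hf hfk with hfE | hlt
  · exact Or.inl hfE
  by_cases hfE : f ∈ E
  · exact Or.inl hfE
  refine Or.inr (by_contra fun hf' => ?_)
  have hfl : f ∈ l := by simpa [hperm.mem_iff] using hfE
  rw [← hl, List.pairwise_append] at hsorted
  rw [← hl, List.mem_append] at hfl
  exact absurd (hsorted.2.2 _ hk _ (hfl.resolve_left hf')) (by omega)

def extremalGraph (n p q : ℕ) : Finset (Fin n × Fin n) :=
  {e | min e.1.val e.2.val < p - 1 ∨ max e.1.val e.2.val < q - 1}

lemma card_extremalGraph {n p q : ℕ} (hp : 1 ≤ p) (hpq : p ≤ q) (hqn : q ≤ n) :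
    #(extremalGraph n p q) = n ^ 2 - (n - p + 1) ^ 2 + (q - p) ^ 2 := by
  set L : ℕ → Finset (Fin n) := fun k => {i | i.val < k}
  have hL : ∀ k ≤ n, #(L k) = k := fun k hk => by simp [L, Fin.card_filter_val_lt, hk]
  have hD : (extremalGraph n p q)ᶜ =
      (L (p - 1))ᶜ ×ˢ (L (p - 1))ᶜ \ (L (q - 1) \ L (p - 1)) ×ˢ (L (q - 1) \ L (p - 1)) := by
    ext e
    simp [extremalGraph, L]
    omega
  have hsub : L (q - 1) \ L (p - 1) ⊆ (L (p - 1))ᶜ := fun i hi => by simp_all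
  have hLL : L (p - 1) ⊆ L (q - 1) := fun i hi => by simp [L] at *; omega
  have hcompl := card_compl (extremalGraph n p q)
  rw [hD, card_sdiff_of_subset (product_subset_product hsub hsub), card_product, card_product,
    card_sdiff_of_subset hLL, card_compl, hL _ (by omega), hL _ (by omega)] at hcompl
  rw [Fintype.card_prod, Fintype.card_fin, show n - (p - 1) = n - p + 1 by omega,
    show q - 1 - (p - 1) = q - p by omega, ← sq, ← sq, ← sq] at hcompl
  have h1 : (q - p) ^ 2 ≤ (n - p + 1) ^ 2 := Nat.pow_le_pow_left (by omega) 2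
  have h2 : (n - p + 1) ^ 2 ≤ n ^ 2 := Nat.pow_le_pow_left (by omega) 2
  have h3 := card_le_univ (extremalGraph n p q)
  rw [Fintype.card_prod, Fintype.card_fin, ← sq] at h3
  omega

lemma isKpq_insert_insert {n p q : ℕ} (hp : 0 < p) (hq : 0 < q) {i j : Fin n}
    (hi : p - 1 ≤ i.val) (hj : q - 1 ≤ j.val) :
    IsKpq p q (insert i ({k | k.val < p - 1} : Finset (Fin n)))
      (insert j ({k | k.val < q - 1} : Finset (Fin n))) := by
  refine Or.inl ⟨?_, ?_⟩ <;>
  · rw [card_insert_of_notMem (by simp; omega), Fin.card_filter_val_lt]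
    omega

theorem weakSatBip_extremalGraph {n p q : ℕ} (hp : 1 ≤ p) (hpq : p ≤ q) :
    WeakSatBip n p q (extremalGraph n p q) := by
  refine weakSatBip_of_rank (fun e => min e.1.val e.2.val) fun ⟨i, j⟩ he => ?_
  simp only [extremalGraph, mem_filter, mem_univ, true_and, not_or, not_lt] at he
  rcases le_or_gt (q - 1) j.val with hj | hj
  · refine ⟨_, _, isKpq_insert_insert (i := i) (j := j) (by omega) (by omega) (by omega) hj,
      mem_product.2 ⟨mem_insert_self _ _, mem_insert_self _ _⟩, ?_⟩
    rintro ⟨s, t⟩ hst hne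
    simp [extremalGraph, Fin.ext_iff] at hst hne ⊢
    omega
  · refine ⟨_, _, isKpq_comm.1
      (isKpq_insert_insert (i := j) (j := i) (by omega) (by omega) (by omega) (by omega)),
      mem_product.2 ⟨mem_insert_self _ _, mem_insert_self _ _⟩, ?_⟩
    rintro ⟨s, t⟩ hst hne
    simp [extremalGraph, Fin.ext_iff] at hst hne ⊢
    omega

theorem Wbip_eq (n p q : ℕ) (hp : 1 ≤ p) (hpq : p ≤ q) (hqn : q ≤ n) :
    Wbip n p q = n ^ 2 - (n - p + 1) ^ 2 + (q - p) ^ 2 := by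
  have hmem : n ^ 2 - (n - p + 1) ^ 2 + (q - p) ^ 2 ∈
      {m | ∃ E : Finset (Fin n × Fin n), WeakSatBip n p q E ∧ E.card = m} :=
    ⟨_, weakSatBip_extremalGraph hp hpq, card_extremalGraph hp hpq hqn⟩
  refine le_antisymm (Nat.sInf_le hmem) (le_csInf ⟨_, hmem⟩ ?_)
  rintro m ⟨E, hE, rfl⟩
  exact hE.le_card hp hpq hqn
end

section
/- Let 1 ≤ p_1 ≤ ... ≤ p_d ≤ n. Then the following sandwich holds: d(p_1−1)(n−p_1+1)^{d−1} ≤ n^d − q_n(p_1,...,p_d) ≤ Σ_{i=1}^d C(d,i)(p_i−1)^i (n−p_i+1)^{d−i}. -/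
/-!
A tuple fails the condition defining `q_n(p)` exactly when `#{j | x_j < p_i} ≥ i` for some
`i` (1-indexed), since the `i`-th order statistic is `< t` iff at least `i` entries are `< t`.
For monotone `p` these counts are monotone in `i`, and the largest such `i` has the count equal
to `i`: so the complement of `q_n(p)` is `⋃ᵢ L_i(p_i)`, with `L_k(t)` the tuples having exactly
`k` entries below `t`. Choosing those `k` coordinates gives
`|L_k(t)| = C(d,k)(t-1)^k(n-t+1)^{d-k}`; the lower bound is the term `L_1(p_1)` of the union
and the upper bound is the union bound.
-/

open Finset

/-- The `i`-th smallest entry (with multiplicity) of the tuple `x`. -/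
def sortedNth {d : ℕ} (x : Fin d → ℕ) (i : Fin d) : ℕ :=
  x (Tuple.sort x i)

/-- The `d`-tuples with entries in `[n] = {1,…,n}`. -/
def tuples (n d : ℕ) : Finset (Fin d → ℕ) :=
  Fintype.piFinset fun _ => Finset.Icc 1 n

/-- `q_n(p_1,…,p_d)`: the number of `x ∈ [n]^d` whose `i`-th smallest
entry is at least `p_i` for every `i`. -/
def qn (n d : ℕ) (p : Fin d → ℕ) : ℕ :=
  ((tuples n d).filter fun x => ∀ i, p i ≤ sortedNth x i).card

section CardFilterPiFinset

variable {ι α : Type*} [Fintype ι] [DecidableEq ι] (A : Finset α) (P : α → Prop)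
  [DecidablePred P]

lemma filter_piFinset_filter_eq (s : Finset ι) :
    {x ∈ Fintype.piFinset (fun _ : ι => A) | ({j | P (x j)} : Finset ι) = s} =
      Fintype.piFinset fun j => if j ∈ s then {a ∈ A | P a} else {a ∈ A | ¬ P a} := by
  ext x
  simp only [mem_filter, Fintype.mem_piFinset, Finset.ext_iff, mem_univ, true_and]
  constructor
  · rintro ⟨hA, hs⟩ j
    by_cases hj : j ∈ s <;> simp [hj, hA j, hs j]
  · intro h
    refine ⟨fun j => ?_, fun j => ?_⟩ <;> have hj := h j <;> split_ifs at hj <;> simp_all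

lemma card_piFinset_ite_mem (s : Finset ι) (B C : Finset α) :
    #(Fintype.piFinset fun j => if j ∈ s then B else C) =
      #B ^ #s * #C ^ (Fintype.card ι - #s) := by
  rw [Fintype.card_piFinset, prod_apply_ite, prod_const, prod_const, filter_univ_mem, filter_not,
    filter_univ_mem, card_univ_sdiff]

theorem card_filter_piFinset_card_filter_eq (k : ℕ) :
    #{x ∈ Fintype.piFinset (fun _ : ι => A) | #{j | P (x j)} = k} =
      (Fintype.card ι).choose k * #{a ∈ A | P a} ^ k *
        #{a ∈ A | ¬ P a} ^ (Fintype.card ι - k) := by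
  rw [card_eq_sum_card_fiberwise (f := fun x => ({j | P (x j)} : Finset ι))
    (t := powersetCard k univ) (fun x hx => by simpa using (mem_filter.1 hx).2)]
  calc _ = ∑ s ∈ powersetCard k (univ : Finset ι),
        #{a ∈ A | P a} ^ k * #{a ∈ A | ¬ P a} ^ (Fintype.card ι - k) := by
        refine sum_congr rfl fun s hs => ?_
        rw [filter_filter, ← (mem_powersetCard.1 hs).2, ← card_piFinset_ite_mem,
          ← filter_piFinset_filter_eq]
        congr 1
        exact filter_congr fun x _ => and_iff_right_of_imp fun h => h ▸ rfl
    _ = _ := by rw [sum_const, card_powersetCard, card_univ, smul_eq_mul, mul_assoc]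

end CardFilterPiFinset

lemma card_Icc_filter_lt {n t : ℕ} (ht : t ≤ n + 1) : #{a ∈ Icc 1 n | a < t} = t - 1 := by
  rw [show {a ∈ Icc 1 n | a < t} = Ico 1 t by ext a; simp; omega, Nat.card_Ico]

lemma card_Icc_filter_not_lt {n t : ℕ} (ht : 1 ≤ t) :
    #{a ∈ Icc 1 n | ¬ a < t} = n + 1 - t := by
  rw [show {a ∈ Icc 1 n | ¬ a < t} = Icc t n by ext a; simp; omega, Nat.card_Icc]

theorem sortedNth_lt_iff {d : ℕ} (x : Fin d → ℕ) (i : Fin d) (t : ℕ) :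
    sortedNth x i < t ↔ (i : ℕ) < #{j | x j < t} := by
  rw [← card_equiv (Tuple.sort x) (s := {j | x (Tuple.sort x j) < t}) (by simp)]
  exact (Tuple.lt_card_lt_iff_apply_lt_of_monotone (Tuple.monotone_sort x)).symm

theorem Fin.exists_apply_eq_succ_of_lt_apply {d : ℕ} {c : Fin d → ℕ} (hc : Monotone c)
    (hcd : ∀ i, c i ≤ d) (h : ∃ i : Fin d, (i : ℕ) < c i) : ∃ i : Fin d, c i = i + 1 := by
  obtain ⟨k, hk, hmax⟩ := exists_max_image {i : Fin d | (i : ℕ) < c i} (fun i => (i : ℕ))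
    (by simpa [Finset.Nonempty] using h)
  rw [mem_filter_univ] at hk
  refine ⟨k, le_antisymm ?_ hk⟩
  -- `m = c k - 1` lies beyond `k`, so by monotonicity it too satisfies `m < c m`
  by_contra! hlt
  have hm : c k - 1 < d := by have := hcd k; omega
  let m : Fin d := ⟨c k - 1, hm⟩
  have hkm : k ≤ m := Fin.mk_le_mk.2 (by omega)
  have hm_mem : (m : ℕ) < c m := lt_of_lt_of_le (by simp only [m]; omega) (hc hkm)
  have := hmax m (mem_filter_univ _ |>.2 hm_mem)
  simp only [m] at this
  omega

/-- The set `L_k(t)` of the paper. -/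
def exactlyBelow (n d k t : ℕ) : Finset (Fin d → ℕ) :=
  {x ∈ tuples n d | #{j | x j < t} = k}

theorem card_exactlyBelow {n d k t : ℕ} (ht1 : 1 ≤ t) (htn : t ≤ n) :
    #(exactlyBelow n d k t) = d.choose k * (t - 1) ^ k * (n - t + 1) ^ (d - k) := by
  rw [exactlyBelow, tuples, card_filter_piFinset_card_filter_eq (Icc 1 n) (· < t),
    Fintype.card_fin, card_Icc_filter_lt (by omega), card_Icc_filter_not_lt ht1,
    Nat.sub_add_comm htn]

theorem card_tuples (n d : ℕ) : #(tuples n d) = n ^ d := by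
  simp [tuples, Fintype.card_piFinset]

theorem sub_qn_eq_card (n d : ℕ) (p : Fin d → ℕ) :
    n ^ d - qn n d p = #{x ∈ tuples n d | ∃ i, sortedNth x i < p i} := by
  rw [← card_tuples n d, qn, ← card_filter_add_card_filter_not (s := tuples n d)
    (fun x => ∀ i, p i ≤ sortedNth x i)]
  simp only [not_forall, not_le, Nat.add_sub_cancel_left]

theorem filter_exists_sortedNth_lt_eq_biUnion {n d : ℕ} {p : Fin d → ℕ} (hp : Monotone p) :
    {x ∈ tuples n d | ∃ i, sortedNth x i < p i} =
      univ.biUnion fun i : Fin d => exactlyBelow n d (i + 1) (p i) := by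
  ext x
  simp only [mem_filter, mem_biUnion, mem_univ, true_and, exactlyBelow, sortedNth_lt_iff]
  constructor
  · rintro ⟨hx, h⟩
    have hmono : Monotone fun i => #{j | x j < p i} := fun i i' hii' =>
      card_le_card (monotone_filter_right _ fun _ _ hj => hj.trans_le (hp hii'))
    obtain ⟨i, hi⟩ := Fin.exists_apply_eq_succ_of_lt_apply hmono
      (fun _ => (card_filter_le _ _).trans_eq (card_fin d)) h
    exact ⟨i, hx, hi⟩
  · rintro ⟨i, hx, hi⟩
    exact ⟨hx, i, by omega⟩

/-- For `1 ≤ p_1 ≤ … ≤ p_d ≤ n`: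
`d(p_1−1)(n−p_1+1)^{d−1} ≤ n^d − q_n(p_1,…,p_d) ≤
Σ_{i=1}^d C(d,i)(p_i−1)^i (n−p_i+1)^{d−i}`. -/
theorem sandwich (n d : ℕ) (hd : 0 < d) (p : Fin d → ℕ) (hmono : Monotone p)
    (hp1 : ∀ i, 1 ≤ p i) (hpn : ∀ i, p i ≤ n) :
    d * (p ⟨0, hd⟩ - 1) * (n - p ⟨0, hd⟩ + 1) ^ (d - 1) ≤
      n ^ d - qn n d p ∧
    n ^ d - qn n d p ≤
      ∑ i : Fin d, d.choose (i.val + 1) * (p i - 1) ^ (i.val + 1) *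
        (n - p i + 1) ^ (d - (i.val + 1)) := by
  rw [sub_qn_eq_card, filter_exists_sortedNth_lt_eq_biUnion hmono]
  constructor
  · calc d * (p ⟨0, hd⟩ - 1) * (n - p ⟨0, hd⟩ + 1) ^ (d - 1)
        = #(exactlyBelow n d 1 (p ⟨0, hd⟩)) := by
          rw [card_exactlyBelow (hp1 _) (hpn _), Nat.choose_one_right, pow_one]
      _ ≤ _ := card_le_card <| subset_biUnion_of_mem
          (fun i : Fin d => exactlyBelow n d (i + 1) (p i)) (mem_univ _)
  · exact card_biUnion_le.trans_eq <| sum_congr rfl fun i _ => card_exactlyBelow (hp1 i) (hpn i)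
end
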